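/- arXiv:1008.1342 — 4 statements merged into one kernel-verified Lean document; each statement's English description precedes it below -/
import Mathlib

section
/- Let K : ℝ → ℝ be a continuous probability kernel with compact support, f a continuous probability density, and (b_n) positive with b_n → 0. Then for any fixed distinct s, t ∈ ℝ, (1/b_n) · ∫ K((s - u)/b_n) K((t - u)/b_n) f(u) du → 0 as n → ∞. -/
open Filter MeasureTheory

theorem cross_term_vanishes_parzen_rosenblatt
    (K : ℝ → ℝ) (hK : Continuous K) (hKnn : ∀ x, 0 ≤ K x)
    (hKsupp : HasCompactSupport K) (hK1 : ∫ u, K u = 1)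
    (f : ℝ → ℝ) (hf : Continuous f) (hfnn : ∀ x, 0 ≤ f x) (hf1 : ∫ x, f x = 1)
    (b : ℕ → ℝ) (hb : ∀ n, 0 < b n) (hb0 : Tendsto b atTop (nhds 0))
    (s t : ℝ) (hst : s ≠ t) :
    Tendsto (fun n => (1 / b n) * ∫ u, K ((s - u) / b n) * K ((t - u) / b n) * f u) atTop
      (nhds 0) := by
  obtain ⟨R, hRpos, hRK⟩ := hKsupp.exists_pos_le_norm
  have hd : 0 < |s - t| := abs_pos.mpr (sub_ne_zero.mpr hst)
  have hev : ∀ᶠ n in atTop, b n < |s - t| / (2 * R) :=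
    hb0.eventually (eventually_lt_nhds (by positivity))
  have heq : (fun n => (1 / b n) * ∫ u, K ((s - u) / b n) * K ((t - u) / b n) * f u)
      =ᶠ[atTop] fun _ => (0 : ℝ) := by
    filter_upwards [hev] with n hn
    have hzero : ∀ u, K ((s - u) / b n) * K ((t - u) / b n) * f u = 0 := by
      intro u
      by_cases h1 : K ((s - u) / b n) = 0
      · simp [h1]
      by_cases h2 : K ((t - u) / b n) = 0
      · simp [h2]
      exfalso
      have hs' : |s - u| / b n < R := by
        have := lt_of_not_ge fun hle => h1 (hRK _ hle)
        rwa [Real.norm_eq_abs, abs_div, abs_of_pos (hb n)] at this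
      have ht' : |t - u| / b n < R := by
        have := lt_of_not_ge fun hle => h2 (hRK _ hle)
        rwa [Real.norm_eq_abs, abs_div, abs_of_pos (hb n)] at this
      have hs'' : |s - u| < R * b n := (div_lt_iff₀ (hb n)).mp hs'
      have ht'' : |t - u| < R * b n := (div_lt_iff₀ (hb n)).mp ht'
      have htri : |s - t| ≤ |s - u| + |t - u| := by
        calc |s - t| = |(s - u) - (t - u)| := by ring_nf
        _ ≤ |s - u| + |t - u| := abs_sub _ _
      have h2R : 2 * R * b n < |s - t| := by
        have := (lt_div_iff₀ (by positivity : (0:ℝ) < 2 * R)).mp hn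
        nlinarith
      linarith
    rw [show (fun u => K ((s - u) / b n) * K ((t - u) / b n) * f u) = fun _ => (0 : ℝ)
        from funext hzero, integral_zero, mul_zero]
  exact Tendsto.congr' heq.symm tendsto_const_nhds
end

section
/- Let (X_0, X_i) be a pair of real random variables with identical continuous marginal density f and continuous joint density f_{0,i}, and let K be a bounded probability kernel with compact support. For b ∈ (0,1] define Z_j(z) = (1/√b)(K((z − X_j)/b) − E[K((z − X_j)/b)]). Then there is a constant C (depending on K, f, f_{0,i} and s, t) such that E|Z_0(s) Z_i(t)| ≤ C·b for all b ∈ (0,1] and all s, t ∈ ℝ in any fixed compact set. -/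
/-!
Write `U = K((s - X₀)/b)` and `V = K((t - Xᵢ)/b)`, with means `a` and `c`. Pointwise
`|(U - a)(V - c)| ≤ (|U| + |a|)(|V| + |c|)`, and `|a| ≤ E|U|`, so
`E|(U - a)(V - c)| ≤ E|UV| + 3 E|U| E|V|`. If `K` vanishes outside `[-R, R]` and `b ≤ 1`, then
`U` and `V` vanish unless `X₀` and `Xᵢ` lie in the compact `R`-thickening `T` of `S`, where the
continuous densities are bounded. Changing variables in the density integrals gives
`E|U| ≤ (sup_T f) b ∫|K|` and `E|UV| ≤ (sup_{T×T} f₀ᵢ) b² (∫|K|)²`, and the factor `1/b` in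
`Z₀ Zᵢ` leaves a bound of order `b`.
-/

open MeasureTheory Metric Set
open scoped ProbabilityTheory

lemma IsCompact.exists_nonneg_upper_bound_of_continuousOn {α : Type*} [TopologicalSpace α]
    {T : Set α} (hT : IsCompact T) {ρ : α → ℝ} (hρ : ContinuousOn ρ T) :
    ∃ M, 0 ≤ M ∧ ∀ x ∈ T, ρ x ≤ M := by
  obtain ⟨C, hC⟩ := hT.exists_bound_of_continuousOn hρ
  exact ⟨max C 0, le_max_right _ _,
    fun x hx => (le_abs_self _).trans ((hC x hx).trans (le_max_left _ _))⟩

lemma HasCompactSupport.integrable_comp {α E Ω : Type*} [TopologicalSpace α]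
    [NormedAddCommGroup E] [MeasurableSpace Ω] {μ : Measure Ω} [IsFiniteMeasure μ] {K : α → E}
    (hK : Continuous K) (hKs : HasCompactSupport K) {φ : Ω → α}
    (hφ : AEStronglyMeasurable φ μ) : Integrable (fun ω => K (φ ω)) μ := by
  obtain ⟨C, hC⟩ := hKs.exists_bound_of_continuous hK
  exact .of_bound (hK.comp_aestronglyMeasurable hφ) C (ae_of_all _ fun ω => hC _)

lemma integral_comp_le_of_density_le {Ω E : Type*} [MeasurableSpace Ω] [MeasurableSpace E]
    {μ : Measure Ω} {ν : Measure E} {X : Ω → E} (hX : Measurable X) {ρ : E → ℝ}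
    (hρ : Measurable ρ) (hmap : μ.map X = ν.withDensity fun x => ENNReal.ofReal (ρ x))
    {g : E → ℝ} (hg : Measurable g) (hg0 : ∀ x, 0 ≤ g x) (hgi : Integrable g ν)
    {M : ℝ} (hM0 : 0 ≤ M) (hM : ∀ x, g x ≠ 0 → ρ x ≤ M) :
    ∫ ω, g (X ω) ∂μ ≤ M * ∫ x, g x ∂ν := by
  rw [← integral_map hX.aemeasurable hg.aestronglyMeasurable, hmap,
    integral_withDensity_eq_integral_toReal_smul hρ.ennreal_ofReal
      (ae_of_all _ fun _ => ENNReal.ofReal_lt_top), ← integral_const_mul]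
  refine integral_mono_of_nonneg (ae_of_all _ fun x => smul_nonneg ENNReal.toReal_nonneg (hg0 x))
    (hgi.const_mul M) (ae_of_all _ fun x => ?_)
  by_cases hx : g x = 0
  · simp [hx]
  · change (ENNReal.ofReal (ρ x)).toReal * g x ≤ M * g x
    rw [ENNReal.toReal_ofReal']
    exact mul_le_mul_of_nonneg_right (max_le (hM x hx) hM0) (hg0 x)

lemma integral_abs_centered_mul_le {Ω : Type*} [MeasurableSpace Ω] {μ : Measure Ω}
    [IsProbabilityMeasure μ] {U V : Ω → ℝ} (hU : Integrable U μ) (hV : Integrable V μ)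
    (hUV : Integrable (fun ω => U ω * V ω) μ) :
    ∫ ω, |(U ω - μ[U]) * (V ω - μ[V])| ∂μ
      ≤ ∫ ω, |U ω * V ω| ∂μ + 3 * ((∫ ω, |U ω| ∂μ) * ∫ ω, |V ω| ∂μ) := by
  set a := μ[U]
  set c := μ[V]
  have hpt : ∀ ω, |(U ω - a) * (V ω - c)|
      ≤ |U ω * V ω| + |c| * |U ω| + |a| * |V ω| + |a| * |c| := by
    intro ω
    calc |(U ω - a) * (V ω - c)| ≤ (|U ω| + |a|) * (|V ω| + |c|) := by
          rw [abs_mul]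
          exact mul_le_mul (abs_sub _ _) (abs_sub _ _) (abs_nonneg _) (by positivity)
      _ = _ := by rw [abs_mul]; ring
  have hUa : |a| ≤ ∫ ω, |U ω| ∂μ := abs_integral_le_integral_abs
  have hVc : |c| ≤ ∫ ω, |V ω| ∂μ := abs_integral_le_integral_abs
  have hsum : ∫ ω, (|U ω * V ω| + |c| * |U ω| + |a| * |V ω| + |a| * |c|) ∂μ
      = ∫ ω, |U ω * V ω| ∂μ + |c| * ∫ ω, |U ω| ∂μ + |a| * ∫ ω, |V ω| ∂μ + |a| * |c| := by
    rw [integral_add, integral_add, integral_add, integral_const_mul, integral_const_mul,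
      integral_const, probReal_univ, one_smul]
    all_goals fun_prop
  calc ∫ ω, |(U ω - a) * (V ω - c)| ∂μ
      ≤ ∫ ω, (|U ω * V ω| + |c| * |U ω| + |a| * |V ω| + |a| * |c|) ∂μ :=
        integral_mono_of_nonneg (ae_of_all _ fun _ => abs_nonneg _) (by fun_prop)
          (ae_of_all _ hpt)
    _ ≤ _ := by
        rw [hsum]
        nlinarith [abs_nonneg a, abs_nonneg c]

section RescaledKernel

variable {K : ℝ → ℝ} {b : ℝ}

lemma dist_le_of_rescaled_ne_zero {R s x : ℝ} (hK : Function.support K ⊆ closedBall 0 R)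
    (hb : 0 < b) (hb1 : b ≤ 1) (hx : K ((s - x) / b) ≠ 0) : dist x s ≤ R := by
  have h : |s - x| / b ≤ R := by simpa [abs_div, abs_of_pos hb] using hK hx
  rw [dist_comm, Real.dist_eq]
  calc |s - x| = |s - x| / b * b := by field_simp
    _ ≤ R * 1 := mul_le_mul h hb1 hb.le ((div_nonneg (abs_nonneg _) hb.le).trans h)
    _ = R := mul_one R

lemma integral_rescaled (hb : 0 < b) (s : ℝ) : ∫ x, K ((s - x) / b) = b * ∫ u, K u := by
  rw [integral_sub_left_eq_self (fun y => K (y / b)) volume s, Measure.integral_comp_div,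
    abs_of_pos hb, smul_eq_mul]

lemma MeasureTheory.Integrable.rescaled (hK : Integrable K) (hb : b ≠ 0) (s : ℝ) :
    Integrable fun x => K ((s - x) / b) :=
  (hK.comp_div hb).comp_sub_left s

variable {Ω : Type*} [MeasurableSpace Ω] {μ : Measure Ω}

lemma integral_abs_rescaled_comp_le {X : Ω → ℝ} (hX : Measurable X) {ρ : ℝ → ℝ}
    (hρ : Measurable ρ) (hmap : μ.map X = volume.withDensity fun x => ENNReal.ofReal (ρ x))
    (hKm : Measurable K) (hK : Integrable K) (hb : 0 < b) {s M : ℝ} (hM0 : 0 ≤ M)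
    (hM : ∀ x, K ((s - x) / b) ≠ 0 → ρ x ≤ M) :
    ∫ ω, |K ((s - X ω) / b)| ∂μ ≤ M * (b * ∫ u, |K u|) := by
  rw [← integral_rescaled (K := fun u => |K u|) hb s]
  exact integral_comp_le_of_density_le hX hρ hmap (by fun_prop) (fun _ => abs_nonneg _)
    (hK.rescaled hb.ne' s).abs hM0 fun x hx => hM x (abs_ne_zero.1 hx)

lemma integral_abs_rescaled_mul_comp_le {X Y : Ω → ℝ} (hX : Measurable X) (hY : Measurable Y)
    {ρ : ℝ × ℝ → ℝ} (hρ : Measurable ρ)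
    (hmap : μ.map (fun ω => (X ω, Y ω)) = volume.withDensity fun p => ENNReal.ofReal (ρ p))
    (hKm : Measurable K) (hK : Integrable K) (hb : 0 < b) {s t M : ℝ} (hM0 : 0 ≤ M)
    (hM : ∀ x y, K ((s - x) / b) ≠ 0 → K ((t - y) / b) ≠ 0 → ρ (x, y) ≤ M) :
    ∫ ω, |K ((s - X ω) / b) * K ((t - Y ω) / b)| ∂μ
      ≤ M * ((b * ∫ u, |K u|) * (b * ∫ u, |K u|)) := by
  have hprod : ∫ p : ℝ × ℝ, |K ((s - p.1) / b) * K ((t - p.2) / b)|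
      = (b * ∫ u, |K u|) * (b * ∫ u, |K u|) := by
    simp_rw [abs_mul]
    rw [Measure.volume_eq_prod, integral_prod_mul (fun x => |K ((s - x) / b)|)
      (fun y => |K ((t - y) / b)|), integral_rescaled (K := fun u => |K u|) hb,
      integral_rescaled (K := fun u => |K u|) hb]
  rw [← hprod]
  refine integral_comp_le_of_density_le (hX.prodMk hY) hρ hmap
    (g := fun p => |K ((s - p.1) / b) * K ((t - p.2) / b)|) (by fun_prop)
    (fun _ => abs_nonneg _) ?_ hM0 fun p hp => ?_
  · rw [Measure.volume_eq_prod]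
    exact ((hK.rescaled hb.ne' s).mul_prod (hK.rescaled hb.ne' t)).abs
  · rw [abs_ne_zero, mul_ne_zero_iff] at hp
    exact hM p.1 p.2 hp.1 hp.2

end RescaledKernel

lemma abs_one_div_sqrt_mul_mul_one_div_sqrt_mul {b : ℝ} (hb : 0 ≤ b) (x y : ℝ) :
    |(1 / √b * x) * (1 / √b * y)| = b⁻¹ * |x * y| := by
  rw [mul_mul_mul_comm, one_div_mul_one_div, Real.mul_self_sqrt hb, abs_mul,
    abs_of_nonneg (by positivity), one_div]

theorem cross_moment_O_of_bandwidth_general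
    {Ω : Type*} [MeasureSpace Ω] [IsProbabilityMeasure (ℙ : Measure Ω)]
    (X0 Xi : Ω → ℝ) (hX0 : Measurable X0) (hXi : Measurable Xi)
    (f : ℝ → ℝ) (hf : Continuous f)
    (f0i : ℝ × ℝ → ℝ) (hf0i : Continuous f0i)
    (hmarg0 : Measure.map X0 ℙ = (volume : Measure ℝ).withDensity fun x => ENNReal.ofReal (f x))
    (hmargi : Measure.map Xi ℙ = (volume : Measure ℝ).withDensity fun x => ENNReal.ofReal (f x))
    (hjoint : Measure.map (fun ω => (X0 ω, Xi ω)) ℙ =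
      (volume : Measure (ℝ × ℝ)).withDensity fun p => ENNReal.ofReal (f0i p))
    (K : ℝ → ℝ) (hK : Continuous K) (hKsupp : HasCompactSupport K)
    (S : Set ℝ) (hS : IsCompact S) :
    ∃ C : ℝ, ∀ b ∈ Set.Ioc (0 : ℝ) 1, ∀ s ∈ S, ∀ t ∈ S,
      (∫ ω, |((1 / Real.sqrt b) * (K ((s - X0 ω) / b) - ∫ ω', K ((s - X0 ω') / b))) *
             ((1 / Real.sqrt b) * (K ((t - Xi ω) / b) - ∫ ω', K ((t - Xi ω') / b)))|) ≤ C * b := by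
  obtain ⟨R, hR⟩ := hKsupp.isBounded.subset_closedBall (0 : ℝ)
  have hKR : Function.support K ⊆ closedBall 0 R := (subset_tsupport K).trans hR
  have hT : IsCompact (cthickening R S) := hS.cthickening
  obtain ⟨M, hM0, hM⟩ := hT.exists_nonneg_upper_bound_of_continuousOn hf.continuousOn
  obtain ⟨M2, hM20, hM2⟩ :=
    (hT.prod hT).exists_nonneg_upper_bound_of_continuousOn hf0i.continuousOn
  obtain ⟨MK, hMK⟩ := hKsupp.exists_bound_of_continuous hK
  have hKint : Integrable K := hK.integrable_of_hasCompactSupport hKsupp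
  refine ⟨(M2 + 3 * M ^ 2) * (∫ u, |K u|) ^ 2, ?_⟩
  rintro b ⟨hb0, hb1⟩ s hs t ht
  have hnear : ∀ {s x}, s ∈ S → K ((s - x) / b) ≠ 0 → x ∈ cthickening R S := fun hs hx =>
    mem_cthickening_of_dist_le _ _ _ _ hs (dist_le_of_rescaled_ne_zero hKR hb0 hb1 hx)
  have hU := integral_abs_rescaled_comp_le hX0 hf.measurable hmarg0 hK.measurable hKint hb0 hM0
    fun x hx => hM x (hnear hs hx)
  have hV := integral_abs_rescaled_comp_le hXi hf.measurable hmargi hK.measurable hKint hb0 hM0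
    fun x hx => hM x (hnear ht hx)
  have hUV := integral_abs_rescaled_mul_comp_le hX0 hXi hf0i.measurable hjoint hK.measurable
    hKint hb0 hM20 fun x y hx hy => hM2 (x, y) ⟨hnear hs hx, hnear ht hy⟩
  have hint : ∀ {X : Ω → ℝ}, Measurable X → ∀ s, Integrable fun ω => K ((s - X ω) / b) :=
    fun hX s => hKsupp.integrable_comp hK (by fun_prop)
  have hUVint := (hint hXi t).bdd_mul (hint hX0 s).aestronglyMeasurable (ae_of_all _ fun _ => hMK _)
  simp_rw [abs_one_div_sqrt_mul_mul_one_div_sqrt_mul hb0.le, integral_const_mul]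
  set I := ∫ u, |K u|
  calc _ ≤ b⁻¹ * ((∫ ω, |K ((s - X0 ω) / b) * K ((t - Xi ω) / b)|)
          + 3 * ((∫ ω, |K ((s - X0 ω) / b)|) * ∫ ω, |K ((t - Xi ω) / b)|)) :=
        mul_le_mul_of_nonneg_left
          (integral_abs_centered_mul_le (hint hX0 s) (hint hXi t) hUVint) (by positivity)
    _ ≤ b⁻¹ * (M2 * ((b * I) * (b * I)) + 3 * ((M * (b * I)) * (M * (b * I)))) := by gcongr
    _ = (M2 + 3 * M ^ 2) * I ^ 2 * b := by field_simp

theorem cross_moment_O_of_bandwidth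
    {Ω : Type*} [MeasureSpace Ω] [IsProbabilityMeasure (ℙ : Measure Ω)]
    (X0 Xi : Ω → ℝ) (hX0 : Measurable X0) (hXi : Measurable Xi)
    (f : ℝ → ℝ) (hf : Continuous f)
    (f0i : ℝ × ℝ → ℝ) (hf0i : Continuous f0i)
    (hmarg0 : Measure.map X0 ℙ = (volume : Measure ℝ).withDensity fun x => ENNReal.ofReal (f x))
    (hmargi : Measure.map Xi ℙ = (volume : Measure ℝ).withDensity fun x => ENNReal.ofReal (f x))
    (hjoint : Measure.map (fun ω => (X0 ω, Xi ω)) ℙ =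
      (volume : Measure (ℝ × ℝ)).withDensity fun p => ENNReal.ofReal (f0i p))
    (K : ℝ → ℝ) (hK : Continuous K) (hKsupp : HasCompactSupport K)
    (hKnn : ∀ x, 0 ≤ K x) (hK1 : ∫ u, K u = 1)
    (S : Set ℝ) (hS : IsCompact S) :
    ∃ C : ℝ, ∀ b ∈ Set.Ioc (0 : ℝ) 1, ∀ s ∈ S, ∀ t ∈ S,
      (∫ ω, |((1 / Real.sqrt b) * (K ((s - X0 ω) / b) - ∫ ω', K ((s - X0 ω') / b))) *
             ((1 / Real.sqrt b) * (K ((t - Xi ω) / b) - ∫ ω', K ((t - Xi ω') / b)))|) ≤ C * b :=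
  cross_moment_O_of_bandwidth_general X0 Xi hX0 hXi f hf f0i hf0i hmarg0 hmargi hjoint K hK hKsupp S
    hS
end

section
/- Let X and Y be real random variables on a probability space, with Y measurable with respect to a σ-algebra V, X measurable with respect to U, and suppose |X| ≤ M and |Y| ≤ M almost surely. Then |Cov(X, Y)| ≤ 4 M² α(U, V), where α(U,V) is the strong mixing coefficient. -/
open MeasureTheory

/-- Rosenblatt's strong mixing coefficient between two sub-σ-algebras. -/
noncomputable def alphaMix {Ω : Type*} {m0 : MeasurableSpace Ω} (μ : Measure Ω)
    (U V : MeasurableSpace Ω) : ℝ :=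
  sSup {x : ℝ | ∃ A B : Set Ω, MeasurableSet[U] A ∧ MeasurableSet[V] B ∧
    x = |(μ (A ∩ B)).toReal - (μ A).toReal * (μ B).toReal|}

/-!
Fix a sub-σ-algebra `𝒢` on which `g` is measurable with `|g| ≤ C`, and put
`h = 𝔼[f | 𝒢] - 𝔼 f`. Pulling `g` out of the conditional expectation gives
`Cov(f, g) = 𝔼[g h]`, hence `|Cov(f, g)| ≤ C 𝔼|h|`; and `𝔼|h|` is the integral of `h` over
`{h ≥ 0} ∈ 𝒢` minus that over its complement, each of the form `∫_B f - μ(B) 𝔼 f`.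
For `B ∈ V`, taking `f = 1_B`, `g = X`, `𝒢 = U` bounds `|∫_B X - μ(B) 𝔼 X|` by `2 M α(U, V)`;
taking then `f = X`, `g = Y`, `𝒢 = V` gives `|Cov(X, Y)| ≤ 4 M² α(U, V)`.
-/

section CondExp

variable {Ω : Type*} {m m0 : MeasurableSpace Ω} {μ : Measure Ω}

theorem integral_abs_le_two_mul_of_abs_setIntegral_le (hm : m ≤ m0) {h : Ω → ℝ}
    (hh : StronglyMeasurable[m] h) (hint : Integrable h μ) {K : ℝ}
    (hK : ∀ B, MeasurableSet[m] B → |∫ ω in B, h ω ∂μ| ≤ K) :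
    ∫ ω, |h ω| ∂μ ≤ 2 * K := by
  set B := {ω | 0 ≤ h ω}
  have hBm : MeasurableSet[m] B := hh.measurable measurableSet_Ici
  have hB : MeasurableSet B := hm _ hBm
  have hpos : ∫ ω in B, |h ω| ∂μ = ∫ ω in B, h ω ∂μ :=
    setIntegral_congr_fun hB fun ω hω => abs_of_nonneg hω
  have hneg : ∫ ω in Bᶜ, |h ω| ∂μ = -∫ ω in Bᶜ, h ω ∂μ := by
    rw [← integral_neg]
    exact setIntegral_congr_fun hB.compl fun ω hω => abs_of_neg (not_le.mp hω)
  rw [← integral_add_compl hB hint.abs, hpos, hneg]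
  linarith [(abs_le.mp (hK B hBm)).2, (abs_le.mp (hK Bᶜ hBm.compl)).1]

variable [IsFiniteMeasure μ]

theorem integral_mul_sub_eq_integral_mul_condExp_sub (hm : m ≤ m0) {f g : Ω → ℝ}
    (hf : Integrable f μ) (hg : StronglyMeasurable[m] g) {C : ℝ} (hgC : ∀ᵐ ω ∂μ, |g ω| ≤ C) :
    (∫ ω, f ω * g ω ∂μ) - (∫ ω, f ω ∂μ) * ∫ ω, g ω ∂μ =
      ∫ ω, g ω * (μ[f|m] ω - ∫ ω, f ω ∂μ) ∂μ := by
  have hgC' : ∀ᵐ ω ∂μ, ‖g ω‖ ≤ C := by simpa only [Real.norm_eq_abs] using hgC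
  have hgm : AEStronglyMeasurable g μ := (hg.mono hm).aestronglyMeasurable
  have hgf : Integrable (fun ω => g ω * f ω) μ := hf.bdd_mul hgm hgC'
  have hgi : Integrable g μ := (integrable_const C).mono' hgm hgC'
  have hpull : ∫ ω, g ω * μ[f|m] ω ∂μ = ∫ ω, f ω * g ω ∂μ :=
    calc ∫ ω, g ω * μ[f|m] ω ∂μ
        = ∫ ω, μ[fun ω => g ω * f ω|m] ω ∂μ :=
          (integral_congr_ae (condExp_mul_of_stronglyMeasurable_left hg hgf hf)).symm
      _ = ∫ ω, f ω * g ω ∂μ := by simp_rw [integral_condExp hm, mul_comm]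
  simp_rw [mul_sub]
  rw [integral_sub (integrable_condExp.bdd_mul hgm hgC') (hgi.mul_const _), hpull,
    integral_mul_const, mul_comm]

theorem abs_integral_mul_sub_le_of_abs_setIntegral_sub_le (hm : m ≤ m0) {f g : Ω → ℝ}
    (hf : Integrable f μ) (hg : StronglyMeasurable[m] g) {C K : ℝ} (hC : 0 ≤ C)
    (hgC : ∀ᵐ ω ∂μ, |g ω| ≤ C)
    (hK : ∀ B, MeasurableSet[m] B → |(∫ ω in B, f ω ∂μ) - μ.real B * ∫ ω, f ω ∂μ| ≤ K) :
    |(∫ ω, f ω * g ω ∂μ) - (∫ ω, f ω ∂μ) * ∫ ω, g ω ∂μ| ≤ 2 * C * K := by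
  set h := fun ω => μ[f|m] ω - ∫ ω, f ω ∂μ
  have hint : Integrable h μ := integrable_condExp.sub (integrable_const _)
  have hsetInt : ∀ B, MeasurableSet[m] B →
      ∫ ω in B, h ω ∂μ = (∫ ω in B, f ω ∂μ) - μ.real B * ∫ ω, f ω ∂μ := fun B hB => by
    rw [integral_sub integrable_condExp.integrableOn (integrable_const _),
      setIntegral_condExp hm hf hB, setIntegral_const, smul_eq_mul]
  have habs : ∫ ω, |h ω| ∂μ ≤ 2 * K :=
    integral_abs_le_two_mul_of_abs_setIntegral_le hm
      (stronglyMeasurable_condExp.sub stronglyMeasurable_const) hint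
      fun B hB => (hsetInt B hB).symm ▸ hK B hB
  rw [integral_mul_sub_eq_integral_mul_condExp_sub hm hf hg hgC]
  calc |∫ ω, g ω * h ω ∂μ| ≤ ∫ ω, |g ω * h ω| ∂μ := abs_integral_le_integral_abs
    _ ≤ ∫ ω, C * |h ω| ∂μ := by
      refine integral_mono_of_nonneg (.of_forall fun _ => abs_nonneg _)
        (hint.abs.const_mul C) ?_
      filter_upwards [hgC] with ω hω
      rw [abs_mul]
      exact mul_le_mul_of_nonneg_right hω (abs_nonneg _)
    _ = C * ∫ ω, |h ω| ∂μ := integral_const_mul _ _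
    _ ≤ C * (2 * K) := mul_le_mul_of_nonneg_left habs hC
    _ = 2 * C * K := by ring

end CondExp

section StrongMixing

variable {Ω : Type*} {U V m0 : MeasurableSpace Ω} {μ : Measure Ω} [IsProbabilityMeasure μ]

theorem abs_measureReal_inter_sub_mul_le_alphaMix {A B : Set Ω} (hA : MeasurableSet[U] A)
    (hB : MeasurableSet[V] B) :
    |μ.real (A ∩ B) - μ.real A * μ.real B| ≤ alphaMix μ U V := by
  refine le_csSup ⟨1, ?_⟩ ⟨A, B, hA, hB, rfl⟩
  rintro _ ⟨A', B', -, -, rfl⟩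
  exact abs_sub_le_of_nonneg_of_le measureReal_nonneg measureReal_le_one
    (mul_nonneg measureReal_nonneg measureReal_nonneg)
    (mul_le_one₀ measureReal_le_one measureReal_nonneg measureReal_le_one)

theorem abs_setIntegral_sub_le_two_mul_alphaMix (hU : U ≤ m0) (hV : V ≤ m0) {X : Ω → ℝ}
    (hX : StronglyMeasurable[U] X) {M : ℝ} (hM : 0 ≤ M) (hXM : ∀ᵐ ω ∂μ, |X ω| ≤ M)
    {B : Set Ω} (hB : MeasurableSet[V] B) :
    |(∫ ω in B, X ω ∂μ) - μ.real B * ∫ ω, X ω ∂μ| ≤ 2 * M * alphaMix μ U V := by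
  have hB0 : MeasurableSet B := hV _ hB
  have hind : ∫ ω, B.indicator 1 ω ∂μ = μ.real B := integral_indicator_one hB0
  have hmul : ∫ ω, B.indicator 1 ω * X ω ∂μ = ∫ ω in B, X ω ∂μ := by
    simp only [← Set.indicator_mul_left, Pi.one_apply, one_mul]
    exact integral_indicator hB0
  have key := abs_integral_mul_sub_le_of_abs_setIntegral_sub_le hU
    (f := B.indicator 1) ((integrable_const 1).indicator hB0) hX hM hXM (K := alphaMix μ U V)
    fun A hA => by
      rw [integral_indicator_one hB0, measureReal_restrict_apply hB0, hind, Set.inter_comm]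
      exact abs_measureReal_inter_sub_mul_le_alphaMix hA hB
  rwa [hmul, hind] at key

end StrongMixing

theorem rio_covariance_inequality_bounded
    {Ω : Type*} {m0 : MeasurableSpace Ω} (μ : Measure Ω) [IsProbabilityMeasure μ]
    (U V : MeasurableSpace Ω) (hU : U ≤ m0) (hV : V ≤ m0)
    (X Y : Ω → ℝ) (hX : StronglyMeasurable[U] X) (hY : StronglyMeasurable[V] Y)
    (M : ℝ) (hXb : ∀ᵐ ω ∂μ, |X ω| ≤ M) (hYb : ∀ᵐ ω ∂μ, |Y ω| ≤ M) :
    |(∫ ω, X ω * Y ω ∂μ) - (∫ ω, X ω ∂μ) * (∫ ω, Y ω ∂μ)| ≤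
      4 * M ^ 2 * alphaMix μ U V := by
  obtain ⟨ω, hω⟩ := hXb.exists
  have hM : 0 ≤ M := (abs_nonneg _).trans hω
  have hXint : Integrable X μ :=
    (integrable_const M).mono' (hX.mono hU).aestronglyMeasurable
      (by simpa only [Real.norm_eq_abs] using hXb)
  calc _ ≤ 2 * M * (2 * M * alphaMix μ U V) :=
        abs_integral_mul_sub_le_of_abs_setIntegral_sub_le hV hXint hY hM hYb
          fun _ hB => abs_setIntegral_sub_le_two_mul_alphaMix hU hV hX hM hXb hB
    _ = 4 * M ^ 2 * alphaMix μ U V := by ring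
end

section
/- Let λ₁, λ₂ ∈ ℝ with λ₁² + λ₂² = 1, let x ≠ y be real numbers, and define Δ₀ = λ₁ Z₀(x) + λ₂ Z₀(y) where Z₀(z) = b_n^{−1/2}(K((z − X₀)/b_n) − E K((z − X₀)/b_n)), with X₀ having continuous density f, K a compactly supported continuous probability kernel with ∫K² < ∞, and b_n → 0. Then E(Δ₀²) → (λ₁² f(x) + λ₂² f(y)) ∫ K²(u) du as n → ∞. -/
/-!
Write `P_z = K((z - X₀)/b)`. Then `λ₁ Z(x) + λ₂ Z(y)` is `b^{-1/2}` times the centred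
variable `λ₁ P_x + λ₂ P_y`, so its second moment is
`λ₁² Var P_x / b + λ₂² Var P_y / b + 2 λ₁ λ₂ Cov(P_x, P_y) / b`.
The substitution `u = z - b v` turns `b⁻¹ E g((z - X₀)/b)` into `∫ g(v) f(z - b v) dv`, which
tends to `f(z) ∫ g` by continuity of `f`; hence `Var P_z / b → f(z) ∫ K²` (the squared mean is
`O(b²)`). For `b < |x - y| / (2R)`, with `supp K ⊆ [-R, R]`, the product `P_x P_y` vanishes
identically, so `Cov(P_x, P_y) / b = -b · (E P_x / b) (E P_y / b) → 0`.
-/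

open MeasureTheory Filter Topology ProbabilityTheory

lemma integral_comp_sub_mul (φ : ℝ → ℝ) (z h : ℝ) :
    ∫ v, φ (z - h * v) = |h⁻¹| * ∫ u, φ u := by
  rw [Measure.integral_comp_mul_left (fun w => φ (z - w)) h, integral_sub_left_eq_self φ volume z,
    smul_eq_mul]

lemma tendsto_integral_mul_comp_sub_mul {ι : Type*} {l : Filter ι} {g f : ℝ → ℝ}
    (hg : Continuous g) (hgs : HasCompactSupport g) (hf : Continuous f) (z : ℝ)
    {b : ι → ℝ} (hb : Tendsto b l (𝓝 0)) :
    Tendsto (fun i => ∫ v, g v * f (z - b i * v)) l (𝓝 ((∫ v, g v) * f z)) := by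
  have hcont : Continuous fun t : ℝ => ∫ v, g v * f (z - t * v) := by
    rw [← continuousOn_univ]
    refine continuousOn_integral_of_compact_support hgs (by fun_prop) fun _ v _ hv => ?_
    rw [image_eq_zero_of_notMem_tsupport hv, zero_mul]
  have hlim := (hcont.tendsto 0).comp hb
  simp only [zero_mul, sub_zero, integral_mul_const] at hlim
  exact hlim

lemma eventually_comp_div_mul_comp_div_eq_zero {g₁ g₂ : ℝ → ℝ} (hg₁ : HasCompactSupport g₁)
    (hg₂ : HasCompactSupport g₂) {x y : ℝ} (hxy : x ≠ y) :
    ∀ᶠ h in 𝓝[>] 0, ∀ u, g₁ ((x - u) / h) * g₂ ((y - u) / h) = 0 := by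
  obtain ⟨R, hR, hsupp⟩ :=
    (hg₁.isCompact.union hg₂.isCompact).isBounded.subset_closedBall_lt 0 0
  have hnear : ∀ {g : ℝ → ℝ} {z u h : ℝ}, tsupport g ⊆ Metric.closedBall 0 R → 0 < h →
      g ((z - u) / h) ≠ 0 → |z - u| ≤ R * h := fun hg h0 hne => by
    have := hg (subset_tsupport _ hne)
    rwa [mem_closedBall_zero_iff, Real.norm_eq_abs, abs_div, abs_of_pos h0,
      div_le_iff₀ h0] at this
  have hδ : 0 < |x - y| / (2 * R) := div_pos (abs_pos.2 (sub_ne_zero.2 hxy)) (by positivity)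
  filter_upwards [Ioo_mem_nhdsGT hδ] with h ⟨h0, hlt⟩ u
  by_contra hne
  obtain ⟨hne₁, hne₂⟩ := mul_ne_zero_iff.1 hne
  have hx := hnear (Set.subset_union_left.trans hsupp) h0 hne₁
  have hy := hnear (Set.subset_union_right.trans hsupp) h0 hne₂
  rw [lt_div_iff₀ (by positivity)] at hlt
  have := abs_sub_le x u y
  rw [abs_sub_comm u y] at this
  linarith

section KernelSmoothing

variable {Ω : Type*} [MeasurableSpace Ω] {μ : Measure Ω}

lemma memLp_comp_of_hasCompactSupport [IsFiniteMeasure μ] {g : ℝ → ℝ} (hg : Continuous g)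
    (hgs : HasCompactSupport g) {Y : Ω → ℝ} (hY : Measurable Y) (p : ENNReal) :
    MemLp (fun ω => g (Y ω)) p μ := by
  obtain ⟨C, hC⟩ := hgs.exists_bound_of_continuous hg
  exact .of_bound (hg.measurable.comp hY).aestronglyMeasurable C (.of_forall fun ω => hC (Y ω))

lemma integral_sq_add_centered [IsProbabilityMeasure μ] {U V : Ω → ℝ} (hU : MemLp U 2 μ)
    (hV : MemLp V 2 μ) (a b c : ℝ) :
    ∫ ω, (a * (c * (U ω - μ[U])) + b * (c * (V ω - μ[V]))) ^ 2 ∂μ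
      = c ^ 2 * (a ^ 2 * Var[U; μ] + b ^ 2 * Var[V; μ] + 2 * a * b * cov[U, V; μ]) := by
  have hU' : MemLp (fun ω => a * c * U ω) 2 μ := hU.const_mul _
  have hV' : MemLp (fun ω => b * c * V ω) 2 μ := hV.const_mul _
  have hmean : ∫ ω, (a * c * U ω + b * c * V ω) ∂μ = a * c * μ[U] + b * c * μ[V] := by
    rw [integral_add (hU'.integrable one_le_two) (hV'.integrable one_le_two),
      integral_const_mul, integral_const_mul]
  calc ∫ ω, (a * (c * (U ω - μ[U])) + b * (c * (V ω - μ[V]))) ^ 2 ∂μ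
      = Var[fun ω => a * c * U ω + b * c * V ω; μ] := by
        rw [variance_eq_integral (X := fun ω => a * c * U ω + b * c * V ω)
          (hU'.aemeasurable.add hV'.aemeasurable), hmean]
        congr with ω
        ring
    _ = c ^ 2 * (a ^ 2 * Var[U; μ] + b ^ 2 * Var[V; μ] + 2 * a * b * cov[U, V; μ]) := by
        rw [variance_fun_add hU' hV', variance_const_mul, variance_const_mul,
          covariance_const_mul_left, covariance_const_mul_right]
        ring

variable {X : Ω → ℝ} {f : ℝ → ℝ} {ι : Type*} {l : Filter ι} {b : ι → ℝ}

lemma integral_comp_eq_integral_mul_density (hX : Measurable X) (hf : Measurable f)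
    (hfnn : ∀ u, 0 ≤ f u) (hdens : μ.map X = volume.withDensity fun u => ENNReal.ofReal (f u))
    {φ : ℝ → ℝ} (hφ : Measurable φ) :
    ∫ ω, φ (X ω) ∂μ = ∫ u, φ u * f u := by
  rw [← integral_map hX.aemeasurable hφ.aestronglyMeasurable, hdens,
    integral_withDensity_eq_integral_toReal_smul (f := fun u => ENNReal.ofReal (f u))
      hf.ennreal_ofReal (.of_forall fun _ => ENNReal.ofReal_lt_top)]
  simp_rw [ENNReal.toReal_ofReal (hfnn _), smul_eq_mul, mul_comm]

lemma inv_mul_integral_comp_div_eq (hX : Measurable X) (hf : Measurable f)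
    (hfnn : ∀ u, 0 ≤ f u) (hdens : μ.map X = volume.withDensity fun u => ENNReal.ofReal (f u))
    {g : ℝ → ℝ} (hg : Measurable g) (z : ℝ) {h : ℝ} (hh : 0 < h) :
    h⁻¹ * ∫ ω, g ((z - X ω) / h) ∂μ = ∫ v, g v * f (z - h * v) := by
  symm
  calc ∫ v, g v * f (z - h * v)
      = ∫ v, (fun u => g ((z - u) / h) * f u) (z - h * v) := by
        congr with v
        dsimp only
        rw [sub_sub_cancel, mul_div_cancel_left₀ v hh.ne']
    _ = h⁻¹ * ∫ ω, g ((z - X ω) / h) ∂μ := by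
        rw [integral_comp_sub_mul (fun u => g ((z - u) / h) * f u), abs_of_pos (inv_pos.2 hh),
          integral_comp_eq_integral_mul_density hX hf hfnn hdens
            (φ := fun u => g ((z - u) / h)) (by fun_prop)]

lemma tendsto_inv_mul_integral_comp_div (hX : Measurable X) (hf : Continuous f)
    (hfnn : ∀ u, 0 ≤ f u) (hdens : μ.map X = volume.withDensity fun u => ENNReal.ofReal (f u))
    {g : ℝ → ℝ} (hg : Continuous g) (hgs : HasCompactSupport g) (z : ℝ)
    (hb : Tendsto b l (𝓝[>] 0)) :
    Tendsto (fun i => (b i)⁻¹ * ∫ ω, g ((z - X ω) / b i) ∂μ) l (𝓝 ((∫ v, g v) * f z)) :=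
  (tendsto_integral_mul_comp_sub_mul hg hgs hf z (tendsto_nhds_of_tendsto_nhdsWithin hb)).congr' <|
    (hb.eventually self_mem_nhdsWithin).mono fun _ hi =>
      (inv_mul_integral_comp_div_eq hX hf.measurable hfnn hdens hg.measurable z hi).symm

variable [IsProbabilityMeasure μ]

lemma tendsto_inv_mul_variance_comp_div (hX : Measurable X) (hf : Continuous f)
    (hfnn : ∀ u, 0 ≤ f u) (hdens : μ.map X = volume.withDensity fun u => ENNReal.ofReal (f u))
    {g : ℝ → ℝ} (hg : Continuous g) (hgs : HasCompactSupport g) (z : ℝ)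
    (hb : Tendsto b l (𝓝[>] 0)) :
    Tendsto (fun i => (b i)⁻¹ * Var[fun ω => g ((z - X ω) / b i); μ]) l
      (𝓝 ((∫ v, g v ^ 2) * f z)) := by
  have hsq := tendsto_inv_mul_integral_comp_div (g := fun v => g v ^ 2) hX hf hfnn hdens
    (hg.pow 2) (hgs.comp_left (g := fun t : ℝ => t ^ 2) (by norm_num)) z hb
  have hmean := tendsto_inv_mul_integral_comp_div hX hf hfnn hdens hg hgs z hb
  have hlim := hsq.sub ((tendsto_nhds_of_tendsto_nhdsWithin hb).mul (hmean.pow 2))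
  rw [zero_mul, sub_zero] at hlim
  refine hlim.congr' ((hb.eventually self_mem_nhdsWithin).mono fun i hi => ?_)
  dsimp only
  rw [variance_eq_sub (memLp_comp_of_hasCompactSupport hg hgs (by fun_prop) 2)]
  simp only [Pi.pow_apply]
  field_simp [ne_of_gt hi]

lemma tendsto_inv_mul_covariance_comp_div (hX : Measurable X) (hf : Continuous f)
    (hfnn : ∀ u, 0 ≤ f u) (hdens : μ.map X = volume.withDensity fun u => ENNReal.ofReal (f u))
    {g₁ g₂ : ℝ → ℝ} (hg₁ : Continuous g₁) (hg₁s : HasCompactSupport g₁) (hg₂ : Continuous g₂)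
    (hg₂s : HasCompactSupport g₂) {x y : ℝ} (hxy : x ≠ y) (hb : Tendsto b l (𝓝[>] 0)) :
    Tendsto (fun i => (b i)⁻¹ *
      cov[fun ω => g₁ ((x - X ω) / b i), fun ω => g₂ ((y - X ω) / b i); μ]) l (𝓝 0) := by
  have h₁ := tendsto_inv_mul_integral_comp_div hX hf hfnn hdens hg₁ hg₁s x hb
  have h₂ := tendsto_inv_mul_integral_comp_div hX hf hfnn hdens hg₂ hg₂s y hb
  have hlim := ((tendsto_nhds_of_tendsto_nhdsWithin hb).mul (h₁.mul h₂)).neg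
  rw [zero_mul, neg_zero] at hlim
  refine hlim.congr' ?_
  filter_upwards [hb.eventually self_mem_nhdsWithin,
    hb.eventually (eventually_comp_div_mul_comp_div_eq_zero hg₁s hg₂s hxy)] with i hi hdisj
  rw [covariance_eq_sub (memLp_comp_of_hasCompactSupport hg₁ hg₁s (by fun_prop) 2)
    (memLp_comp_of_hasCompactSupport hg₂ hg₂s (by fun_prop) 2)]
  simp only [Pi.mul_apply, hdisj, integral_zero]
  field_simp [ne_of_gt hi]
  ring

end KernelSmoothing

theorem variance_of_cramer_wold_combination_general
    {Ω : Type*} [MeasureSpace Ω] [IsProbabilityMeasure (ℙ : Measure Ω)]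
    (X0 : Ω → ℝ) (hX0 : Measurable X0)
    (f : ℝ → ℝ) (hf : Continuous f) (hfnn : ∀ x, 0 ≤ f x)
    (hdens : Measure.map X0 ℙ = (volume : Measure ℝ).withDensity fun x => ENNReal.ofReal (f x))
    (K : ℝ → ℝ) (hK : Continuous K) (hKsupp : HasCompactSupport K)
    (b : ℕ → ℝ) (hbpos : ∀ n, 0 < b n) (hb0 : Tendsto b atTop (nhds 0))
    (lam1 lam2 : ℝ)
    (x y : ℝ) (hxy : x ≠ y)
    (Z : ℕ → ℝ → Ω → ℝ)
    (hZ : ∀ n z ω, Z n z ω = (1 / Real.sqrt (b n)) *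
      (K ((z - X0 ω) / b n) - ∫ ω', K ((z - X0 ω') / b n))) :
    Tendsto (fun n => ∫ ω, (lam1 * Z n x ω + lam2 * Z n y ω) ^ 2) atTop
      (nhds ((lam1 ^ 2 * f x + lam2 ^ 2 * f y) * ∫ u, (K u) ^ 2)) := by
  have hb : Tendsto b atTop (𝓝[>] 0) := tendsto_nhdsWithin_iff.2 ⟨hb0, .of_forall hbpos⟩
  have hmemLp (z : ℝ) (n : ℕ) : MemLp (fun ω => K ((z - X0 ω) / b n)) 2 :=
    memLp_comp_of_hasCompactSupport hK hKsupp (by fun_prop) 2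
  have hexpand (n : ℕ) : ∫ ω, (lam1 * Z n x ω + lam2 * Z n y ω) ^ 2
      = lam1 ^ 2 * ((b n)⁻¹ * Var[fun ω => K ((x - X0 ω) / b n)])
        + lam2 ^ 2 * ((b n)⁻¹ * Var[fun ω => K ((y - X0 ω) / b n)])
        + 2 * lam1 * lam2 *
          ((b n)⁻¹ * cov[fun ω => K ((x - X0 ω) / b n), fun ω => K ((y - X0 ω) / b n)]) := by
    simp only [hZ]
    rw [integral_sq_add_centered (hmemLp x n) (hmemLp y n), one_div, inv_pow,
      Real.sq_sqrt (hbpos n).le]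
    ring
  have hvar (z : ℝ) := tendsto_inv_mul_variance_comp_div hX0 hf hfnn hdens hK hKsupp z hb
  have hcov := tendsto_inv_mul_covariance_comp_div hX0 hf hfnn hdens hK hKsupp hK hKsupp hxy hb
  have hlim := (((hvar x).const_mul (lam1 ^ 2)).add ((hvar y).const_mul (lam2 ^ 2))).add
    (hcov.const_mul (2 * lam1 * lam2))
  simp only [hexpand]
  convert hlim using 2
  ring

theorem variance_of_cramer_wold_combination
    {Ω : Type*} [MeasureSpace Ω] [IsProbabilityMeasure (ℙ : Measure Ω)]
    (X0 : Ω → ℝ) (hX0 : Measurable X0)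
    (f : ℝ → ℝ) (hf : Continuous f) (hfnn : ∀ x, 0 ≤ f x)
    (hdens : Measure.map X0 ℙ = (volume : Measure ℝ).withDensity fun x => ENNReal.ofReal (f x))
    (K : ℝ → ℝ) (hK : Continuous K) (hKsupp : HasCompactSupport K)
    (hKnn : ∀ x, 0 ≤ K x) (hK1 : ∫ u, K u = 1) (hK2 : Integrable fun u => (K u) ^ 2)
    (b : ℕ → ℝ) (hbpos : ∀ n, 0 < b n) (hb0 : Tendsto b atTop (nhds 0))
    (lam1 lam2 : ℝ) (hlam : lam1 ^ 2 + lam2 ^ 2 = 1)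
    (x y : ℝ) (hxy : x ≠ y)
    (Z : ℕ → ℝ → Ω → ℝ)
    (hZ : ∀ n z ω, Z n z ω = (1 / Real.sqrt (b n)) *
      (K ((z - X0 ω) / b n) - ∫ ω', K ((z - X0 ω') / b n))) :
    Tendsto (fun n => ∫ ω, (lam1 * Z n x ω + lam2 * Z n y ω) ^ 2) atTop
      (nhds ((lam1 ^ 2 * f x + lam2 ^ 2 * f y) * ∫ u, (K u) ^ 2)) :=
  variance_of_cramer_wold_combination_general X0 hX0 f hf hfnn hdens K hK hKsupp b hbpos hb0 lam1
    lam2 x y hxy Z hZ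
end
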